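/- arXiv:1611.03267 — 4 statements merged into one kernel-verified Lean document; each statement's English description precedes it below -/
import Mathlib

section
/- Let T be a reflexive and transitive binary relation on a set A, and let U ⊆ A. Assume that for every a ∉ U and every b ∈ A, if T a b and T b a then a = b. Define T' a b := T a b ∧ (a ≠ b ∨ a ∈ U). Then T' is transitive. -/
theorem stmt_7_general (A : Type*) (T : A → A → Prop) (U : Set A)
    (htrans : ∀ a b c, T a b → T b c → T a c)
    (hU : ∀ a ∉ U, ∀ b, T a b → T b a → a = b) :
    ∀ a b c : A,
      (T a b ∧ (a ≠ b ∨ a ∈ U)) → (T b c ∧ (b ≠ c ∨ b ∈ U)) →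
      (T a c ∧ (a ≠ c ∨ a ∈ U)) := by
  rintro a b c ⟨hab, hab_ne_or_mem⟩ ⟨hbc, -⟩
  refine ⟨htrans a b c hab hbc, or_iff_not_imp_right.2 fun ha hac => ?_⟩
  subst hac
  -- a T b T a with a ∉ U forces a = b, so the pair (a, b) was a removed reflexive pair.
  exact hab_ne_or_mem.elim (· (hU a ha b hab hbc)) ha

theorem stmt_7 (A : Type*) (T : A → A → Prop) (U : Set A)
    (hrefl : ∀ a, T a a)
    (htrans : ∀ a b c, T a b → T b c → T a c)
    (hU : ∀ a ∉ U, ∀ b, T a b → T b a → a = b) :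
    ∀ a b c : A,
      (T a b ∧ (a ≠ b ∨ a ∈ U)) → (T b c ∧ (b ≠ c ∨ b ∈ U)) →
      (T a c ∧ (a ≠ c ∨ a ∈ U)) :=
  stmt_7_general A T U htrans hU
end

section
/- Let A be a finite type, let E1 and E2 be equivalence relations on A, and let P, Q, S ⊆ A. Assume: (1) there exists a ∈ P ∩ S; (2) for every a ∈ S and b ∈ A, if E2 a b then a = b; (3) for every a ∈ P there exists b ∈ Q with E1 a b and a ≠ b; (4) for every a ∈ Q there exists b ∈ P with E2 a b and a ≠ b; (5) for all a, b ∈ P, if E1 a b then a = b; (6) for all a, b ∈ Q, if E2 a b then a = b. Then a contradiction follows (no such finite structure exists). -/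
/-!
Choose for each `a ∈ P` an `E1`-neighbour `φ a ∈ Q`, and for each `b ∈ Q` an `E2`-neighbour
`ψ b ∈ P` different from `b`. Both maps are injective, since two points sent to the same point
are related, and `P`, `Q` are discrete for `E1`, `E2` respectively. The point `a ∈ P ∩ S` is
not in the range of `ψ`, because `S` is discrete for `E2` and `ψ b ≠ b`. So `ψ ∘ φ` is an
injective, non-surjective self-map of `P`, which is impossible when `A` is finite.
-/

open Function

theorem injective_of_rel_of_discrete {A : Type*} {r : A → A → Prop} (hr : Equivalence r)
    {s t : Set A} (hs : ∀ a ∈ s, ∀ b ∈ s, r a b → a = b) (f : s → t)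
    (hf : ∀ a : s, r a (f a)) : Injective f := by
  intro a b hab
  have hrab : r a b := hr.trans (hf a) (hab ▸ hr.symm (hf b))
  exact Subtype.ext (hs a a.2 b b.2 hrab)

theorem stmt_8 (A : Type*) [Finite A] (E1 E2 : A → A → Prop)
    (hE1 : Equivalence E1) (hE2 : Equivalence E2)
    (P Q S : Set A)
    (h1 : ∃ a, a ∈ P ∧ a ∈ S)
    (h2 : ∀ a ∈ S, ∀ b, E2 a b → a = b)
    (h3 : ∀ a ∈ P, ∃ b ∈ Q, E1 a b ∧ a ≠ b)
    (h4 : ∀ a ∈ Q, ∃ b ∈ P, E2 a b ∧ a ≠ b)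
    (h5 : ∀ a ∈ P, ∀ b ∈ P, E1 a b → a = b)
    (h6 : ∀ a ∈ Q, ∀ b ∈ Q, E2 a b → a = b) :
    False := by
  obtain ⟨a, haP, haS⟩ := h1
  choose f hfQ hfE _ using h3
  choose g hgP hgE hgne using h4
  let φ : P → Q := fun x => ⟨f x x.2, hfQ x x.2⟩
  let ψ : Q → P := fun y => ⟨g y y.2, hgP y y.2⟩
  have hφ : Injective φ := injective_of_rel_of_discrete hE1 h5 φ fun x => hfE x x.2
  have hψ : Injective ψ := injective_of_rel_of_discrete hE2 h6 ψ fun y => hgE y y.2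
  have ha_notMem : ⟨a, haP⟩ ∉ Set.range (ψ ∘ φ) := by
    rintro ⟨x, hx⟩
    have hgx : g (φ x) (φ x).2 = a := congrArg Subtype.val hx
    have hax : a = φ x := h2 a haS _ (hE2.symm (hgx ▸ hgE _ _))
    exact hgne _ _ (hax.symm.trans hgx.symm)
  exact ha_notMem (Finite.injective_iff_surjective.mp (hψ.comp hφ) _)
end

section
/- Let A be a finite type, T a reflexive and transitive binary relation on A, R a binary relation on A, and P, U ⊆ A. Assume: (1) there exists a ∈ P ∩ U; (2) for every a ∈ P there exists b ∈ P with T a b and (a ∈ U ↔ b ∉ U); (3) for all a, b, if T a b then R a b or (a ∈ U ↔ b ∈ U); (4) for all a, b, if R a b then ¬ R b a. Then a contradiction follows (no such finite structure exists). -/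
/-!
Starting in `P` and repeatedly applying (2) gives a `T`-chain along which membership in `U`
alternates. As `A` is finite the chain revisits a point, so by transitivity some step
`a → b` of it is also `T`-related backwards. Since `a` and `b` disagree on `U`, (3) gives both
`R a b` and `R b a`, contradicting (4).
-/

theorem exists_rel_succ_rel_of_finite {A : Type*} [Finite A] {T : A → A → Prop} [IsTrans A T]
    {f : ℕ → A} (hf : ∀ n, T (f n) (f (n + 1))) : ∃ n, T (f (n + 1)) (f n) := by
  obtain ⟨i, j, hij, hfij⟩ :=
    Set.finite_univ.exists_lt_map_eq_of_forall_mem (f := f) fun n => Set.mem_univ (f n)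
  refine ⟨i, ?_⟩
  rcases (Nat.succ_le_of_lt hij).eq_or_lt with rfl | hlt
  · simpa only [← hfij] using hf i
  · simpa only [← hfij] using Nat.rel_of_forall_rel_succ_of_lt T hf hlt

theorem false_of_rel_of_rel_of_mem_iff_not_mem {A : Type*} {T R : A → A → Prop} {U : Set A}
    (hTR : ∀ a b, T a b → R a b ∨ (a ∈ U ↔ b ∈ U)) (hR : ∀ a b, R a b → ¬ R b a)
    {a b : A} (hab : T a b) (hba : T b a) (hU : a ∈ U ↔ b ∉ U) : False := by
  have hRab : R a b := (hTR a b hab).resolve_right (by tauto)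
  have hRba : R b a := (hTR b a hba).resolve_right (by tauto)
  exact hR a b hRab hRba

theorem stmt_9_general (A : Type*) [Finite A] (T R : A → A → Prop)
    (P U : Set A)
    (htrans : ∀ a b c, T a b → T b c → T a c)
    (h1 : ∃ a, a ∈ P ∧ a ∈ U)
    (h2 : ∀ a ∈ P, ∃ b ∈ P, T a b ∧ (a ∈ U ↔ b ∉ U))
    (h3 : ∀ a b, T a b → R a b ∨ (a ∈ U ↔ b ∈ U))
    (h4 : ∀ a b, R a b → ¬ R b a) :
    False := by
  have : IsTrans A T := ⟨htrans⟩
  obtain ⟨a, haP, -⟩ := h1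
  choose next hnextP hnextT hnextU using h2
  let step : P → P := fun x => ⟨next x x.2, hnextP x x.2⟩
  let f : ℕ → A := fun n => (step^[n] ⟨a, haP⟩ : P)
  have hf_succ (n : ℕ) : f (n + 1) = next (f n) (step^[n] ⟨a, haP⟩).2 := by
    simp only [f, Function.iterate_succ_apply', step]
  obtain ⟨n, hback⟩ := exists_rel_succ_rel_of_finite (T := T) (f := f) fun n => by
    rw [hf_succ]; exact hnextT _ _
  rw [hf_succ] at hback
  exact false_of_rel_of_rel_of_mem_iff_not_mem h3 h4 (hnextT _ _) hback (hnextU _ _)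

theorem stmt_9 (A : Type*) [Finite A] (T R : A → A → Prop)
    (P U : Set A)
    (hrefl : ∀ a, T a a)
    (htrans : ∀ a b c, T a b → T b c → T a c)
    (h1 : ∃ a, a ∈ P ∧ a ∈ U)
    (h2 : ∀ a ∈ P, ∃ b ∈ P, T a b ∧ (a ∈ U ↔ b ∉ U))
    (h3 : ∀ a b, T a b → R a b ∨ (a ∈ U ↔ b ∈ U))
    (h4 : ∀ a b, R a b → ¬ R b a) :
    False :=
  stmt_9_general A T R P U htrans h1 h2 h3 h4
end

section
/- Let Γ be a system of m linear inequalities in n unknowns with all coefficients and constants in {-a, ..., a}. If Γ admits a nonnegative integer solution, then it admits a nonnegative integer solution in which every value assigned to an unknown is at most n·(m·a)^{2m+1}. -/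
/-!
Take a solution `z` that is lexicographically minimal; call a coordinate large if it exceeds
`γ = m! aᵐ` and a row tight if its slack is below `a L`, where `L = (m + 1)! aᵐ`. Growing a
nonsingular minor one column at a time, Cramer's rule shows that the columns of the tight rows at
the large coordinates either have a nonzero integer kernel vector `d` with entries at most `γ` and
`∑ |dⱼ| ≤ L`, or contain a nonsingular square minor. In the first case `z + d` and `z - d` are both
solutions (the tight rows do not see `d`, the other rows have slack at least `a L`), and one of
them is lexicographically smaller. In the second case Cramer's rule bounds the large coordinates,
since on a tight row their contribution to `C z` is at most `a (1 + L + n γ)` in absolute value.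
For a single inequality this estimate is too weak, but there one coordinate equal to `a` suffices.
-/

open Matrix Finset Function
open scoped Nat

namespace Matrix

variable {a : ℤ}

theorem abs_det_le_factorial_mul_pow {κ : Type*} [Fintype κ] [DecidableEq κ]
    (A : Matrix κ κ ℤ) (hA : ∀ i j, |A i j| ≤ a) :
    |A.det| ≤ (Fintype.card κ)! * a ^ Fintype.card κ := by
  simpa using det_le (abv := AbsoluteValue.abs) hA

theorem abs_adjugate_le_factorial_mul_pow {t : ℕ} (A : Matrix (Fin (t + 1)) (Fin (t + 1)) ℤ)
    (hA : ∀ i j, |A i j| ≤ a) (i j : Fin (t + 1)) : |A.adjugate i j| ≤ t ! * a ^ t := by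
  rw [adjugate_fin_succ_eq_det_submatrix, abs_mul, abs_pow, abs_neg, abs_one, one_pow, one_mul]
  simpa using abs_det_le_factorial_mul_pow (A.submatrix j.succAbove i.succAbove) fun k l => hA _ _

theorem abs_adjugate_mulVec_le {s : ℕ} (A : Matrix (Fin s) (Fin s) ℤ) (hA : ∀ i j, |A i j| ≤ a)
    {u : Fin s → ℤ} {U : ℤ} (hu : ∀ l, |u l| ≤ a * U) (k : Fin s) :
    |(A.adjugate *ᵥ u) k| ≤ s ! * a ^ s * U := by
  obtain _ | t := s
  · exact k.elim0
  have ha : 0 ≤ a := (abs_nonneg _).trans (hA 0 0)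
  calc |(A.adjugate *ᵥ u) k| = |∑ l, A.adjugate k l * u l| := rfl
    _ ≤ ∑ l, |A.adjugate k l * u l| := abs_sum_le_sum_abs _ _
    _ ≤ ∑ _l : Fin (t + 1), t ! * a ^ t * (a * U) := by
      refine sum_le_sum fun l _ => ?_
      rw [abs_mul]
      exact mul_le_mul (abs_adjugate_le_factorial_mul_pow A hA k l) (hu l) (abs_nonneg _)
        (by positivity)
    _ = (t + 1)! * a ^ (t + 1) * U := by
      simp only [sum_const, card_univ, Fintype.card_fin, nsmul_eq_mul, Nat.factorial_succ]
      push_cast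
      ring

theorem adjugate_mulVec_mulVec {κ : Type*} [Fintype κ] [DecidableEq κ] {R : Type*} [CommRing R]
    (A : Matrix κ κ R) (v : κ → R) : A.adjugate *ᵥ (A *ᵥ v) = A.det • v := by
  rw [mulVec_mulVec, adjugate_mul, smul_mulVec, one_mulVec]

theorem abs_le_of_det_ne_zero {s : ℕ} (A : Matrix (Fin s) (Fin s) ℤ) (hA : ∀ i j, |A i j| ≤ a)
    (hdet : A.det ≠ 0) {v : Fin s → ℤ} {U : ℤ} (hv : ∀ l, |(A *ᵥ v) l| ≤ a * U) (k : Fin s) :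
    |v k| ≤ s ! * a ^ s * U :=
  calc |v k| ≤ |A.det| * |v k| := le_mul_of_one_le_left (abs_nonneg _) (Int.one_le_abs hdet)
    _ = |(A.adjugate *ᵥ (A *ᵥ v)) k| := by
      rw [adjugate_mulVec_mulVec, Pi.smul_apply, smul_eq_mul, abs_mul]
    _ ≤ s ! * a ^ s * U := abs_adjugate_mulVec_le A hA hv k

theorem det_ne_zero_of_mulVec_eq_single {R : Type*} [CommRing R] [NoZeroDivisors R] {s : ℕ}
    (N : Matrix (Fin (s + 1)) (Fin (s + 1)) R)
    (hN : (N.submatrix Fin.castSucc Fin.castSucc).det ≠ 0)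
    {d : Fin (s + 1) → R} {δ : R} (hd : N *ᵥ d = Pi.single (Fin.last s) δ) (hδ : δ ≠ 0) :
    N.det ≠ 0 := by
  intro h0
  have := congrFun (adjugate_mulVec_mulVec N d) (Fin.last s)
  rw [hd, h0, zero_smul, mulVec_single] at this
  simp only [Pi.smul_apply, col_apply, Pi.zero_apply, MulOpposite.smul_eq_mul_unop,
    MulOpposite.unop_op, adjugate_fin_succ_eq_det_submatrix, Fin.succAbove_last] at this
  simp [hN, hδ] at this

variable {ι κ : Type*}

theorem abs_mulVec_le [Fintype κ] (M : Matrix ι κ ℤ)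
    (hM : ∀ i j, |M i j| ≤ a) (v : κ → ℤ) (i : ι) : |(M *ᵥ v) i| ≤ a * ∑ j, |v j| :=
  calc |(M *ᵥ v) i| = |∑ j, M i j * v j| := rfl
    _ ≤ ∑ j, |M i j * v j| := abs_sum_le_sum_abs _ _
    _ ≤ ∑ j, a * |v j| := sum_le_sum fun j _ => by
        rw [abs_mul]
        exact mul_le_mul_of_nonneg_right (hM i j) (abs_nonneg _)
    _ = a * ∑ j, |v j| := (mul_sum _ _ _).symm

-- Cramer's rule makes the rows `r` annihilate it; all rows do when the last column depends on the
-- first `s`.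
def cramerVec {α : Type*} [CommRing α] {s : ℕ} (M : Matrix ι (Fin (s + 1)) α) (r : Fin s → ι) :
    Fin (s + 1) → α :=
  Fin.snoc ((M.submatrix r Fin.castSucc).adjugate *ᵥ fun k => M (r k) (Fin.last s))
    (-(M.submatrix r Fin.castSucc).det)

theorem mulVec_cramerVec_apply {α : Type*} [CommRing α] {s : ℕ} (M : Matrix ι (Fin (s + 1)) α)
    (r : Fin s → ι) (k : Fin s) : (M *ᵥ cramerVec M r) (r k) = 0 := by
  set R := M.submatrix r Fin.castSucc
  have hR := congrFun (show R *ᵥ (R.adjugate *ᵥ fun k => M (r k) (Fin.last s)) =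
      R.det • fun k => M (r k) (Fin.last s) by
    rw [mulVec_mulVec, mul_adjugate, smul_mulVec, one_mulVec]) k
  simp only [cramerVec, mulVec, dotProduct, Fin.sum_univ_castSucc, Fin.snoc_castSucc,
    Fin.snoc_last] at hR ⊢
  simp only [R, submatrix_apply, Pi.smul_apply, smul_eq_mul] at hR
  rw [hR]
  ring

theorem abs_cramerVec_le {s : ℕ} (M : Matrix ι (Fin (s + 1)) ℤ) (hM : ∀ i j, |M i j| ≤ a)
    (r : Fin s → ι) (j : Fin (s + 1)) : |cramerVec M r j| ≤ s ! * a ^ s := by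
  refine Fin.lastCases ?_ (fun k => ?_) j
  · simpa [cramerVec] using
      abs_det_le_factorial_mul_pow (M.submatrix r Fin.castSucc) fun _ _ => hM _ _
  · simpa [cramerVec] using abs_adjugate_mulVec_le (M.submatrix r Fin.castSucc)
      (fun _ _ => hM _ _) (U := 1) (fun _ => by simpa using hM _ _) k

variable [Fintype ι]

-- The bounds are what Cramer's rule gives from a nonsingular minor with at most `card ι` rows.
def IsSmallKernelVector [Fintype κ] (M : Matrix ι κ ℤ) (a : ℤ) (d : κ → ℤ) : Prop :=
  d ≠ 0 ∧ M *ᵥ d = 0 ∧ (∀ j, |d j| ≤ (Fintype.card ι)! * a ^ Fintype.card ι) ∧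
    ∑ j, |d j| ≤ (Fintype.card ι + 1)! * a ^ Fintype.card ι

theorem exists_isSmallKernelVector_or_det_ne_zero_succ (ha : 1 ≤ a) {s : ℕ}
    (M : Matrix ι (Fin (s + 1)) ℤ) (hM : ∀ i j, |M i j| ≤ a) (r : Fin s ↪ ι)
    (hr : (M.submatrix r Fin.castSucc).det ≠ 0) :
    (∃ d, IsSmallKernelVector M a d) ∨ ∃ r' : Fin (s + 1) ↪ ι, (M.submatrix r' id).det ≠ 0 := by
  set d := cramerVec M r
  by_cases hker : M *ᵥ d = 0
  · have hsι : s ≤ Fintype.card ι := by simpa using Fintype.card_le_of_embedding r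
    have hd := abs_cramerVec_le M hM r
    refine Or.inl ⟨d, fun h => hr ?_, hker, fun j => (hd j).trans (by gcongr), ?_⟩
    · simpa [d, cramerVec] using congrFun h (Fin.last s)
    · calc ∑ j, |d j| ≤ ∑ _j : Fin (s + 1), (s ! : ℤ) * a ^ s := sum_le_sum fun j _ => hd j
        _ = (s + 1)! * a ^ s := by simp [Nat.factorial_succ]; ring
        _ ≤ (Fintype.card ι + 1)! * a ^ Fintype.card ι := by gcongr
  obtain ⟨i₀, hi₀⟩ := Function.ne_iff.mp hker
  have hi₀r : i₀ ∉ Set.range r := by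
    rintro ⟨k, rfl⟩
    exact hi₀ (mulVec_cramerVec_apply M r k)
  set r' := Fin.Embedding.snoc r hi₀r
  set N := M.submatrix r' id
  have hNR : N.submatrix Fin.castSucc Fin.castSucc = M.submatrix r Fin.castSucc := by
    ext k l
    simp [N, r']
  refine Or.inr ⟨r', det_ne_zero_of_mulVec_eq_single N (hNR ▸ hr) (d := d) ?_ hi₀⟩
  have hNd : ∀ q, (N *ᵥ d) q = (M *ᵥ d) (r' q) := fun q => rfl
  ext q
  refine Fin.lastCases ?_ (fun k => ?_) q
  · rw [hNd, Fin.Embedding.snoc_last, Pi.single_eq_same]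
  · rw [hNd, Fin.Embedding.snoc_castSucc, mulVec_cramerVec_apply,
      Pi.single_eq_of_ne (Fin.castSucc_lt_last k).ne]

theorem exists_isSmallKernelVector_or_det_ne_zero (ha : 1 ≤ a) :
    ∀ {s : ℕ} (M : Matrix ι (Fin s) ℤ), (∀ i j, |M i j| ≤ a) →
    (∃ d, IsSmallKernelVector M a d) ∨
      ∃ r : Fin s ↪ ι, (M.submatrix r id).det ≠ 0
  | 0, M, _ => Or.inr ⟨⟨Fin.elim0, fun x => x.elim0⟩, by simp⟩
  | s + 1, M, hM => by
    rcases exists_isSmallKernelVector_or_det_ne_zero ha (M.submatrix id Fin.castSucc)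
        fun _ _ => hM _ _ with
      ⟨d, hd0, hMd, hd, hdsum⟩ | ⟨r, hr⟩
    · have ha0 : 0 ≤ a := zero_le_one.trans ha
      refine Or.inl ⟨Fin.snoc d 0, fun h => hd0 ?_, ?_,
        Fin.lastCases (by simp only [Fin.snoc_last, abs_zero]; positivity)
          fun k => by simpa using hd k,
        by simpa [Fin.sum_univ_castSucc] using hdsum⟩
      · funext k
        simpa using congrFun h k.castSucc
      · funext i
        simpa [mulVec, dotProduct, Fin.sum_univ_castSucc] using congrFun hMd i
    · exact exists_isSmallKernelVector_or_det_ne_zero_succ ha M hM r hr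

end Matrix

theorem sum_extend_zero {α β γ M : Type*} [Fintype α] [Fintype β] [Zero γ] [AddCommMonoid M]
    {e : α → β} (he : Injective e) (d : α → γ) (f : β → γ → M) (hf : ∀ j, f j 0 = 0) :
    ∑ j, f j (extend e d 0 j) = ∑ l, f (e l) (d l) :=
  (Fintype.sum_of_injective e he _ _
    (fun j hj => by rw [extend_apply' _ _ _ (by simpa using hj), Pi.zero_apply, hf])
    fun l => by rw [he.extend_apply]).symm

section LexMinimal

variable {m n : ℕ} (C : Matrix (Fin m) (Fin n) ℤ) (b : Fin m → ℤ)

theorem toLex_toNat_sub_lt {z : Fin n → ℕ} {d : Fin n → ℤ} (hd : 0 < toLex d)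
    (hdz : ∀ j, d j ≤ z j) : toLex (fun j => (z j - d j).toNat) < toLex z := by
  obtain ⟨i, hlt, hi⟩ := hd
  refine ⟨i, fun j hj => ?_, ?_⟩
  · have : d j = 0 := (hlt j hj).symm
    simp [this]
  · have := hdz i
    change 0 < d i at hi
    change (z i - d i).toNat < z i
    omega

theorem le_mulVec_toNat_sub {z : Fin n → ℕ} {d : Fin n → ℤ} (hdz : ∀ j, d j ≤ z j)
    (hslack : ∀ i, |(C *ᵥ d) i| ≤ (C *ᵥ fun j => (z j : ℤ)) i - b i) :
    b ≤ C *ᵥ fun j => ((z j - d j).toNat : ℤ) := by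
  intro i
  have hcast : (fun j => ((z j - d j).toNat : ℤ)) = (fun j => (z j : ℤ)) - d :=
    funext fun j => Int.toNat_of_nonneg (sub_nonneg.mpr (hdz j))
  rw [hcast, mulVec_sub, Pi.sub_apply]
  linarith [le_abs_self ((C *ᵥ d) i), hslack i]

theorem exists_toLex_lt {z : Fin n → ℕ} {d : Fin n → ℤ} (hd : d ≠ 0) (hdz : ∀ j, |d j| ≤ z j)
    (hslack : ∀ i, |(C *ᵥ d) i| ≤ (C *ᵥ fun j => (z j : ℤ)) i - b i) :
    ∃ x : Fin n → ℕ, (b ≤ C *ᵥ fun j => (x j : ℤ)) ∧ toLex x < toLex z := by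
  obtain ⟨d', hd'pos, hd'⟩ : ∃ d', 0 < toLex d' ∧ (d' = d ∨ d' = -d) := by
    rcases lt_or_gt_of_ne (show toLex d ≠ 0 from hd) with hneg | hpos
    · exact ⟨-d, neg_pos.mpr hneg, Or.inr rfl⟩
    · exact ⟨d, hpos, Or.inl rfl⟩
  have habs : ∀ j, |d' j| = |d j| := by rcases hd' with rfl | rfl <;> simp
  have hCabs : ∀ i, |(C *ᵥ d') i| = |(C *ᵥ d) i| := by
    rcases hd' with rfl | rfl <;> simp [mulVec_neg]
  have hdz' : ∀ j, d' j ≤ z j := fun j => (le_abs_self _).trans ((habs j).trans_le (hdz j))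
  exact ⟨_, le_mulVec_toNat_sub C b hdz' fun i => (hCabs i).trans_le (hslack i),
    toLex_toNat_sub_lt hd'pos hdz'⟩

theorem abs_sum_le_of_slack_lt {a γ L : ℤ} (hC : ∀ i j, |C i j| ≤ a) (hγ : 0 ≤ γ)
    {z : Fin n → ℕ} (T : Finset (Fin n)) (hT : ∀ j ∉ T, (z j : ℤ) ≤ γ) {i : Fin m}
    (hbi : |b i| ≤ a) (hzi : b i ≤ (C *ᵥ fun j => (z j : ℤ)) i)
    (hslack : (C *ᵥ fun j => (z j : ℤ)) i - b i < a * L) :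
    |∑ j ∈ T, C i j * z j| ≤ a * (1 + L + n * γ) := by
  have ha : 0 ≤ a := (abs_nonneg _).trans hbi
  have hrow : |(C *ᵥ fun j => (z j : ℤ)) i| ≤ a * (1 + L) := by
    rw [abs_le]
    constructor <;> linarith [abs_le.mp hbi]
  have hrest : |∑ j ∈ Tᶜ, C i j * z j| ≤ n * (a * γ) :=
    calc |∑ j ∈ Tᶜ, C i j * z j| ≤ ∑ j ∈ Tᶜ, |C i j * z j| := abs_sum_le_sum_abs _ _
      _ ≤ ∑ _j ∈ Tᶜ, a * γ := sum_le_sum fun j hj => by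
          rw [abs_mul, Nat.abs_cast]
          exact mul_le_mul (hC i j) (hT j (mem_compl.mp hj)) (Nat.cast_nonneg _) ha
      _ ≤ n * (a * γ) := by
          rw [sum_const, nsmul_eq_mul]
          gcongr
          exact_mod_cast (card_le_univ _).trans_eq (Fintype.card_fin n)
  have hsplit : ∑ j ∈ T, C i j * z j
      = (C *ᵥ fun j => (z j : ℤ)) i - ∑ j ∈ Tᶜ, C i j * z j := by
    rw [eq_sub_iff_add_eq, sum_add_sum_compl]
    rfl
  rw [hsplit]
  calc _ ≤ a * (1 + L) + n * (a * γ) := (abs_sub _ _).trans (add_le_add hrow hrest)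
    _ = a * (1 + L + n * γ) := by ring

def IsLexMinSolution (z : Fin n → ℕ) : Prop :=
  (b ≤ C *ᵥ fun j => (z j : ℤ)) ∧
    ∀ x : Fin n → ℕ, (b ≤ C *ᵥ fun j => (x j : ℤ)) → ¬toLex x < toLex z

theorem exists_isLexMinSolution {z₀ : Fin n → ℕ} (hz₀ : b ≤ C *ᵥ fun j => (z₀ j : ℤ)) :
    ∃ z, IsLexMinSolution C b z :=
  (InvImage.wf toLex wellFounded_lt).has_min {x : Fin n → ℕ | b ≤ C *ᵥ fun j => (x j : ℤ)}
    ⟨z₀, hz₀⟩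

variable {C b} {a : ℤ} {z : Fin n → ℕ}

theorem IsLexMinSolution.exists_sum_ne_zero (hz : IsLexMinSolution C b z)
    (hC : ∀ i j, |C i j| ≤ a) {s : ℕ} (e : Fin s ↪ Fin n) {d : Fin s → ℤ} (hd : d ≠ 0)
    (hdz : ∀ l, |d l| ≤ z (e l)) :
    ∃ i, (C *ᵥ fun j => (z j : ℤ)) i - b i < a * ∑ l, |d l| ∧ ∑ l, C i (e l) * d l ≠ 0 := by
  set D := extend e d 0
  have hDe : ∀ l, D (e l) = d l := fun l => e.injective.extend_apply _ _ l
  have hD0 : D ≠ 0 := fun h => hd (funext fun l => by simpa [hDe] using congrFun h (e l))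
  have hDz : ∀ j, |D j| ≤ z j := by
    intro j
    by_cases hj : ∃ l, e l = j
    · obtain ⟨l, rfl⟩ := hj
      rw [hDe]
      exact hdz l
    · simp [D, extend_apply' _ _ _ hj]
  have hCD : ∀ i, (C *ᵥ D) i = ∑ l, C i (e l) * d l := fun i =>
    sum_extend_zero e.injective d (fun j v => C i j * v) fun _ => mul_zero _
  have hsum : ∑ j, |D j| = ∑ l, |d l| :=
    sum_extend_zero e.injective d (fun _ v => |v|) fun _ => abs_zero
  obtain ⟨i, hi⟩ : ∃ i, (C *ᵥ fun j => (z j : ℤ)) i - b i < |(C *ᵥ D) i| := by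
    by_contra! h
    obtain ⟨x, hx, hlt⟩ := exists_toLex_lt C b hD0 hDz h
    exact hz.2 x hx hlt
  refine ⟨i, hi.trans_le ((abs_mulVec_le C hC D i).trans_eq (by rw [hsum])), fun h0 => ?_⟩
  rw [hCD, h0, abs_zero] at hi
  exact hi.not_ge (sub_nonneg.mpr (hz.1 i))

theorem IsLexMinSolution.exists_det_ne_zero (hz : IsLexMinSolution C b z) (ha : 1 ≤ a)
    (hC : ∀ i j, |C i j| ≤ a) {s : ℕ} (e : Fin s ↪ Fin n) (he : ∀ l, (m ! : ℤ) * a ^ m < z (e l)) :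
    ∃ r : Fin s ↪ {i // (C *ᵥ fun j => (z j : ℤ)) i - b i < a * ((m + 1)! * a ^ m)},
      (C.submatrix (fun k => r k) e).det ≠ 0 := by
  set W := {i // (C *ᵥ fun j => (z j : ℤ)) i - b i < a * ((m + 1)! * a ^ m)}
  have hWm : Fintype.card W ≤ m := (Fintype.card_subtype_le _).trans_eq (Fintype.card_fin m)
  rcases exists_isSmallKernelVector_or_det_ne_zero ha (C.submatrix (fun i : W => i) e)
      (fun _ _ => hC _ _) with ⟨d, hd0, hAd, hdγ, hdL⟩ | ⟨r, hr⟩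
  · have hdz : ∀ l, |d l| ≤ z (e l) := fun l => ((hdγ l).trans (by gcongr)).trans (he l).le
    obtain ⟨i, hi, hne⟩ := hz.exists_sum_ne_zero hC e hd0 hdz
    exact absurd (congrFun hAd ⟨i, hi.trans_le (by gcongr; exact hdL.trans (by gcongr))⟩) hne
  · exact ⟨r, hr⟩

theorem IsLexMinSolution.apply_le {a : ℕ} (hz : IsLexMinSolution C b z) (ha : 1 ≤ a)
    (hC : ∀ i j, |C i j| ≤ a) (hb : ∀ i, |b i| ≤ a) (j : Fin n) :
    z j ≤ m ! * a ^ m * (1 + (m + 1)! * a ^ m + n * (m ! * a ^ m)) := by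
  have ha' : (1 : ℤ) ≤ a := by exact_mod_cast ha
  set γ : ℤ := m ! * a ^ m with hγ
  set L : ℤ := (m + 1)! * a ^ m with hL
  suffices (z j : ℤ) ≤ γ * (1 + L + n * γ) by
    rw [hγ, hL] at this
    exact_mod_cast this
  by_cases hjγ : γ < z j
  swap
  · have : 1 ≤ 1 + L + n * γ := by
      have : 0 ≤ L + n * γ := by positivity
      linarith
    exact (not_lt.mp hjγ).trans (le_mul_of_one_le_right (by positivity) this)
  set T := univ.filter fun j => γ < z j with hT
  obtain ⟨e, he⟩ : ∃ e : Fin #T ↪ Fin n, univ.map e = T := ⟨_, T.map_orderEmbOfFin_univ rfl⟩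
  obtain ⟨r, hr⟩ := hz.exists_det_ne_zero ha' hC e fun l =>
    (mem_filter.mp (he.subset (mem_map_of_mem e (mem_univ l)))).2
  obtain ⟨l, -, rfl⟩ := mem_map.mp (he.symm.subset (mem_filter.mpr ⟨mem_univ j, hjγ⟩))
  have hTm : #T ≤ m := by
    simpa using (Fintype.card_le_of_embedding r).trans (Fintype.card_subtype_le _)
  have hRz : ∀ k, |(C.submatrix (fun k => r k) e *ᵥ fun l => (z (e l) : ℤ)) k| ≤
      a * (1 + L + n * γ) := by
    intro k
    have hrow : (C.submatrix (fun k => r k) e *ᵥ fun l => (z (e l) : ℤ)) k =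
        ∑ j ∈ T, C (r k) j * z j :=
      (sum_map univ e fun j => C (r k) j * (z j : ℤ)).symm.trans
        (congrArg (fun S => ∑ j ∈ S, C (r k) j * (z j : ℤ)) he)
    rw [hrow]
    exact abs_sum_le_of_slack_lt C b hC (by positivity) T
      (fun j hj => by simpa [hT] using hj) (hb _) (hz.1 _) (r k).2
  calc (z (e l) : ℤ) ≤ (#T)! * a ^ #T * (1 + L + n * γ) :=
        (le_abs_self _).trans (abs_le_of_det_ne_zero _ (fun _ _ => hC _ _) hr hRz l)
    _ ≤ γ * (1 + L + n * γ) := by rw [hγ]; gcongr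

end LexMinimal

theorem factorial_succ_le_pow (t : ℕ) : (t + 1)! ≤ (t + 1) ^ t := by
  induction t with
  | zero => simp
  | succ t ih =>
    rw [Nat.factorial_succ, pow_succ']
    gcongr
    exact ih.trans (Nat.pow_le_pow_left (by omega) t)

theorem factorial_mul_pow_bound_le {m n a : ℕ} (hm : 2 ≤ m) (hn : 1 ≤ n) (ha : 1 ≤ a) :
    m ! * a ^ m * (1 + (m + 1)! * a ^ m + n * (m ! * a ^ m)) ≤ n * (m * a) ^ (2 * m + 1) := by
  obtain ⟨t, rfl⟩ : ∃ t, m = t + 1 := ⟨m - 1, by omega⟩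
  set F := (t + 1)! * a ^ (t + 1)
  have hF : 1 ≤ F := Nat.one_le_iff_ne_zero.mpr (by positivity)
  have hmF : (t + 1) * (t + 1)! ≤ (t + 1) ^ (t + 1) := by
    rw [pow_succ']
    exact Nat.mul_le_mul_left _ (factorial_succ_le_pow t)
  have hcube : t + 1 + 2 + n ≤ n * (t + 1) ^ 3 * a := by
    have h1 : t + 4 ≤ (t + 1) ^ 3 := by
      have ht : 1 ≤ t := by omega
      nlinarith [Nat.mul_le_mul ht ht]
    have h2 : n * (t + 1) ^ 3 ≤ n * (t + 1) ^ 3 * a := Nat.le_mul_of_pos_right _ ha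
    nlinarith [Nat.mul_le_mul_left n h1]
  calc F * (1 + (t + 1 + 1)! * a ^ (t + 1) + n * F)
      = F * (1 + (t + 2) * F + n * F) := by rw [Nat.factorial_succ]; ring
    _ ≤ F * (F + (t + 2) * F + n * F) := by gcongr
    _ = F ^ 2 * (t + 1 + 2 + n) := by ring
    _ ≤ F ^ 2 * (n * (t + 1) ^ 3 * a) := by gcongr
    _ = ((t + 1) * (t + 1)!) ^ 2 * (a ^ (t + 1)) ^ 2 * (n * (t + 1) * a) := by ring
    _ ≤ ((t + 1) ^ (t + 1)) ^ 2 * (a ^ (t + 1)) ^ 2 * (n * (t + 1) * a) := by gcongr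
    _ = n * ((t + 1) * a) ^ (2 * (t + 1) + 1) := by rw [mul_pow]; ring

theorem exists_le_of_le_sum {n : ℕ} (c : Fin n → ℤ) {β : ℤ} {a : ℕ} (hβ : β ≤ a)
    (hsol : ∃ x : Fin n → ℕ, β ≤ ∑ j, c j * x j) :
    ∃ y : Fin n → ℕ, β ≤ ∑ j, c j * y j ∧ ∀ j, y j ≤ a := by
  by_cases hβ0 : β ≤ 0
  · exact ⟨0, by simpa using hβ0, fun _ => Nat.zero_le _⟩
  obtain ⟨j, hj⟩ : ∃ j, 0 < c j := by
    by_contra! h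
    obtain ⟨x, hx⟩ := hsol
    have : ∑ j, c j * x j ≤ 0 :=
      sum_nonpos fun j _ => mul_nonpos_of_nonpos_of_nonneg (h j) (by positivity)
    omega
  refine ⟨Pi.single j a, ?_, fun k => ?_⟩
  · have : ∑ k, c k * ((Pi.single j a : Fin n → ℕ) k : ℤ) = c j * a := by
      simp [Pi.single_apply]
    rw [this]
    nlinarith
  · rcases eq_or_ne k j with rfl | hk
    · simp
    · simp [hk]

theorem stmt_12 (m n a : ℕ) (ha : 0 < a)
    (c : Fin m → Fin n → ℤ) (b : Fin m → ℤ)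
    (hc : ∀ i j, |c i j| ≤ (a : ℤ)) (hb : ∀ i, |b i| ≤ (a : ℤ))
    (hsol : ∃ x : Fin n → ℕ, ∀ i, b i ≤ ∑ j, c i j * (x j : ℤ)) :
    ∃ y : Fin n → ℕ, (∀ i, b i ≤ ∑ j, c i j * (y j : ℤ)) ∧
      ∀ j, y j ≤ n * (m * a) ^ (2 * m + 1) := by
  obtain _ | _ | m := m
  · exact ⟨0, fun i => i.elim0, fun _ => Nat.zero_le _⟩
  · obtain ⟨y, hy, hya⟩ := exists_le_of_le_sum (c 0) (le_of_abs_le (hb 0))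
      (hsol.imp fun x hx => hx 0)
    refine ⟨y, fun i => by rwa [Fin.fin_one_eq_zero i], fun j => (hya j).trans ?_⟩
    calc a ≤ a ^ 3 := Nat.le_self_pow (by norm_num) a
      _ ≤ n * (1 * a) ^ (2 * 1 + 1) := by
        rw [one_mul]
        exact Nat.le_mul_of_pos_left _ j.pos
  · obtain ⟨x₀, hx₀⟩ := hsol
    obtain ⟨z, hz⟩ := exists_isLexMinSolution c b hx₀
    exact ⟨z, hz.1, fun j => (hz.apply_le ha hc hb j).trans
      (factorial_mul_pow_bound_le (by omega) j.pos ha)⟩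
end
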